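/- Let ⟨x,y⟩₁ = −x₀y₀ + x₁y₁ + x₂y₂ + x₃y₃ + x₄y₄ denote the Lorentzian bilinear form on ℝ⁵, let a be a nonzero real number, let A : ℝ → ℝ be differentiable, and for s ≠ 0 define x(s,t,u) = ((a A(s)² + a)/s + a s u² + s/(4a), s u, A(s)cos t, A(s)sin t, (a A(s)² + a)/s + a s u² − s/(4a)). Then for all (s,t,u) with s ≠ 0: ⟨x, x⟩₁ = −1 (so x takes values in H⁴ = {x ∈ ℝ⁵ : ⟨x,x⟩₁ = −1}), and ⟨∂ₛx, ∂ₛx⟩₁ = ((A(s) − s A'(s))² + 1)/s², ⟨∂ₜx, ∂ₜx⟩₁ = A(s)², ⟨∂ᵤx, ∂ᵤx⟩₁ = s², with ⟨∂ₛx, ∂ₜx⟩₁ = ⟨∂ₛx, ∂ᵤx⟩₁ = ⟨∂ₜx, ∂ᵤx⟩₁ = 0. -/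
import Mathlib


/-- The Lorentzian bilinear form on `ℝ⁵` with timelike coordinate `x₀`. -/
def lor5 (x y : Fin 5 → ℝ) : ℝ :=
  -(x 0 * y 0) + x 1 * y 1 + x 2 * y 2 + x 3 * y 3 + x 4 * y 4

/-- Case (3) of Theorem 4.8: the hypersurface (4.9) of `H⁴ ⊂ ℝ⁵₁` lies in `H⁴`
and has induced metric `(((A − sA')² + 1)/s²)ds² + A²dt² + s²du²`. -/
theorem stmt_15 (a : ℝ) (ha : a ≠ 0) (A : ℝ → ℝ) (hA : Differentiable ℝ A)
    (x : ℝ → ℝ → ℝ → Fin 5 → ℝ)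
    (hx : ∀ s t u : ℝ, s ≠ 0 → x s t u =
      ![(a * A s ^ 2 + a) / s + a * s * u ^ 2 + s / (4 * a), s * u,
        A s * Real.cos t, A s * Real.sin t,
        (a * A s ^ 2 + a) / s + a * s * u ^ 2 - s / (4 * a)]) :
    ∀ s t u : ℝ, s ≠ 0 →
      lor5 (x s t u) (x s t u) = -1 ∧
      lor5 (deriv (fun s' => x s' t u) s) (deriv (fun s' => x s' t u) s)
        = ((A s - s * deriv A s) ^ 2 + 1) / s ^ 2 ∧
      lor5 (deriv (fun t' => x s t' u) t) (deriv (fun t' => x s t' u) t) = A s ^ 2 ∧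
      lor5 (deriv (fun u' => x s t u') u) (deriv (fun u' => x s t u') u) = s ^ 2 ∧
      lor5 (deriv (fun s' => x s' t u) s) (deriv (fun t' => x s t' u) t) = 0 ∧
      lor5 (deriv (fun s' => x s' t u) s) (deriv (fun u' => x s t u') u) = 0 ∧
      lor5 (deriv (fun t' => x s t' u) t) (deriv (fun u' => x s t u') u) = 0 := by
  intro s t u hs
  have hA' : ∀ v : ℝ, HasDerivAt A (deriv A v) v := fun v => (hA v).hasDerivAt
  set A' := deriv A s with hA'def
  -- derivative of the rational part in s
  have h1 : HasDerivAt (fun s' => (a * A s' ^ 2 + a) / s')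
      ((a * (↑2 * A s ^ 1 * A') * s - (a * A s ^ 2 + a) * 1) / s ^ 2) s := by
    exact ((((hA' s).pow 2).const_mul a).add_const a).div (hasDerivAt_id s) hs
  have h0 : HasDerivAt (fun s' => (a * A s' ^ 2 + a) / s' + a * s' * u ^ 2 + s' / (4 * a))
      ((a * (↑2 * A s ^ 1 * A') * s - (a * A s ^ 2 + a) * 1) / s ^ 2 + a * 1 * u ^ 2 + 1 / (4 * a)) s := by
    have hm : HasDerivAt (fun s' => a * s' * u ^ 2) (a * 1 * u ^ 2) s :=
      ((hasDerivAt_id s).const_mul a).mul_const (u ^ 2)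
    exact (h1.add hm).add ((hasDerivAt_id s).div_const (4 * a))
  have h4 : HasDerivAt (fun s' => (a * A s' ^ 2 + a) / s' + a * s' * u ^ 2 - s' / (4 * a))
      ((a * (↑2 * A s ^ 1 * A') * s - (a * A s ^ 2 + a) * 1) / s ^ 2 + a * 1 * u ^ 2 - 1 / (4 * a)) s := by
    have hm : HasDerivAt (fun s' => a * s' * u ^ 2) (a * 1 * u ^ 2) s :=
      ((hasDerivAt_id s).const_mul a).mul_const (u ^ 2)
    exact (h1.add hm).sub ((hasDerivAt_id s).div_const (4 * a))
  set D : ℝ := (a * (↑2 * A s ^ 1 * A') * s - (a * A s ^ 2 + a) * 1) / s ^ 2 + a * 1 * u ^ 2 with hD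
  -- s-derivative of x
  have hxs : HasDerivAt (fun s' => x s' t u)
      (![D + 1 / (4 * a), 1 * u, A' * Real.cos t, A' * Real.sin t, D - 1 / (4 * a)]) s := by
    have hev : (fun s' => x s' t u) =ᶠ[nhds s]
        (fun s' => ![(a * A s' ^ 2 + a) / s' + a * s' * u ^ 2 + s' / (4 * a), s' * u,
          A s' * Real.cos t, A s' * Real.sin t,
          (a * A s' ^ 2 + a) / s' + a * s' * u ^ 2 - s' / (4 * a)]) :=
      (eventually_ne_nhds hs).mono fun s' h => hx s' t u h
    have hexp : HasDerivAt (fun s' => (![(a * A s' ^ 2 + a) / s' + a * s' * u ^ 2 + s' / (4 * a), s' * u,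
          A s' * Real.cos t, A s' * Real.sin t,
          (a * A s' ^ 2 + a) / s' + a * s' * u ^ 2 - s' / (4 * a)] : Fin 5 → ℝ))
        (![D + 1 / (4 * a), 1 * u, A' * Real.cos t, A' * Real.sin t, D - 1 / (4 * a)]) s := by
      rw [hasDerivAt_pi]
      intro i
      fin_cases i <;>
        simp only [Matrix.cons_val_zero, Matrix.cons_val_one, Matrix.head_cons,
          Matrix.cons_val_two, Matrix.tail_cons, Matrix.cons_val_three, Matrix.cons_val_four,
          Matrix.cons_val_fin_one, Fin.isValue]
      · exact h0
      · exact (hasDerivAt_id s).mul_const u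
      · exact (hA' s).mul_const _
      · exact (hA' s).mul_const _
      · exact h4
    exact hexp.congr_of_eventuallyEq hev
  -- t-derivative of x
  have hxt : HasDerivAt (fun t' => x s t' u)
      (![0, 0, A s * -Real.sin t, A s * Real.cos t, 0]) t := by
    have heq : (fun t' => x s t' u) = fun t' =>
        ![(a * A s ^ 2 + a) / s + a * s * u ^ 2 + s / (4 * a), s * u,
          A s * Real.cos t', A s * Real.sin t',
          (a * A s ^ 2 + a) / s + a * s * u ^ 2 - s / (4 * a)] :=
      funext fun t' => hx s t' u hs
    rw [heq, hasDerivAt_pi]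
    intro i
    fin_cases i <;>
      simp only [Matrix.cons_val_zero, Matrix.cons_val_one, Matrix.head_cons,
        Matrix.cons_val_two, Matrix.tail_cons, Matrix.cons_val_three, Matrix.cons_val_four,
        Matrix.cons_val_fin_one, Fin.isValue]
    · exact hasDerivAt_const t _
    · exact hasDerivAt_const t _
    · exact (Real.hasDerivAt_cos t).const_mul (A s)
    · exact (Real.hasDerivAt_sin t).const_mul (A s)
    · exact hasDerivAt_const t _
  -- u-derivative of x
  have hxu : HasDerivAt (fun u' => x s t u')
      (![a * s * (↑2 * u ^ 1), s * 1, 0, 0, a * s * (↑2 * u ^ 1)]) u := by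
    have heq : (fun u' => x s t u') = fun u' =>
        ![(a * A s ^ 2 + a) / s + a * s * u' ^ 2 + s / (4 * a), s * u',
          A s * Real.cos t, A s * Real.sin t,
          (a * A s ^ 2 + a) / s + a * s * u' ^ 2 - s / (4 * a)] :=
      funext fun u' => hx s t u' hs
    rw [heq, hasDerivAt_pi]
    intro i
    fin_cases i <;>
      simp only [Matrix.cons_val_zero, Matrix.cons_val_one, Matrix.head_cons,
        Matrix.cons_val_two, Matrix.tail_cons, Matrix.cons_val_three, Matrix.cons_val_four,
        Matrix.cons_val_fin_one, Fin.isValue]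
    · exact (((hasDerivAt_pow 2 u).const_mul (a * s)).const_add _).add_const _
    · exact (hasDerivAt_id u).const_mul s
    · exact hasDerivAt_const u _
    · exact hasDerivAt_const u _
    · exact (((hasDerivAt_pow 2 u).const_mul (a * s)).const_add _).sub_const _
  rw [hxs.deriv, hxt.deriv, hxu.deriv, hx s t u hs]
  simp only [lor5, Matrix.cons_val_zero, Matrix.cons_val_one, Matrix.head_cons,
    Matrix.cons_val_two, Matrix.tail_cons, Matrix.cons_val_three, Matrix.cons_val_four,
    Matrix.cons_val_fin_one, Fin.isValue, hD]
  refine ⟨?_, ?_, ?_, ?_, ?_, ?_, ?_⟩ <;>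
    ring_nf <;>
    (try rw [Real.sin_sq]) <;>
    (try field_simp) <;>
    (try ring)
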